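/- (Helly-type theorem for s-convex sets) Let C₁,…,C_m ⊆ S_Φ (m ≥ n) be nonempty s-convex sets. If ⋂_{j∈J} C_j ≠ ∅ for every J ⊆ {1,…,m} with |J| = n, and ⋃_{j∈J} C_j ≠ S_Φ for every J ⊆ {1,…,m} with |J| = n+1, then ⋂_{i=1}^m C_i ≠ ∅. -/

import Mathlib

open Set
open scoped RealInnerProductSpace

/-- `rho Φ x = x / Φ x` (equal to `0` when `Φ x = 0`, in particular `rho Φ 0 = 0`). -/
noncomputable def rho {n : ℕ} (Φ : EuclideanSpace ℝ (Fin n) → ℝ)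
    (x : EuclideanSpace ℝ (Fin n)) : EuclideanSpace ℝ (Fin n) := (Φ x)⁻¹ • x

/-- The `Φ`-sphere `S_Φ = {x | Φ x = 1}`. -/
def sphereSet {n : ℕ} (Φ : EuclideanSpace ℝ (Fin n) → ℝ) : Set (EuclideanSpace ℝ (Fin n)) :=
  {x | Φ x = 1}

/-- `S` is s-convex: `ρ(λx + (1-λ)y) ∈ S` for all `x, y ∈ S`, `λ ∈ [0,1]`. -/
def SConvex {n : ℕ} (Φ : EuclideanSpace ℝ (Fin n) → ℝ)
    (S : Set (EuclideanSpace ℝ (Fin n))) : Prop :=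
  ∀ x ∈ S, ∀ y ∈ S, ∀ l : ℝ, l ∈ Set.Icc (0 : ℝ) 1 → rho Φ (l • x + (1 - l) • y) ∈ S

/-!
For an s-convex `S ⊆ S_Φ`, the preimage `ρ⁻¹(S)` is the open cone `ℝ_{>0} • S`, and s-convexity
says exactly that this cone is closed under addition: it is a convex cone not containing `0`.
Helly's theorem then follows by induction on the number of sets from a Radon-type argument.
Given `N ≥ n + 1` such cones `K_k` and points `p_i ∈ ⋂_{k ≠ i} K_k`, take a nonzero dependence
`∑ a_i p_i = 0`; if `a` takes both signs, `∑ a_i⁺ p_i = ∑ a_i⁻ p_i` lies in every `K_k`.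
A nonzero dependence with `a ≥ 0` is impossible: if some `a_k = 0` it puts `0` in `K_k`, and if
`a > 0`, subtracting multiples of `a` puts every nonzero vector of the span of the `p_i` into some
`K_k`. That forces `N = n + 1` with the `p_i` spanning `ℝⁿ`, so the `C_k` would cover `S_Φ`.
-/

open Module

section ConeFamily

variable {E ι : Type*} [AddCommGroup E] [Module ℝ E] [Fintype ι]

theorem ConvexCone.linearCombination_mem {K : ConvexCone ℝ E} {p : ι → E} {b : ι → ℝ}
    (hb : 0 ≤ b) (hb0 : b ≠ 0) (hp : ∀ i, b i ≠ 0 → p i ∈ K) :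
    Fintype.linearCombination ℝ p b ∈ K := by
  classical
  rw [Fintype.linearCombination_apply,
    ← Finset.sum_filter_of_ne (p := (b · ≠ 0)) fun i _ h hbi => h (by rw [hbi, zero_smul])]
  obtain ⟨i, hi⟩ := Function.ne_iff.mp hb0
  refine Finset.sum_induction_nonempty _ (· ∈ K) (fun _ _ => add_mem) ⟨i, by simpa using hi⟩ ?_
  intro j hj
  have hj : b j ≠ 0 := (Finset.mem_filter.mp hj).2
  exact K.smul_mem (lt_of_le_of_ne (hb j) hj.symm) (hp j hj)

theorem exists_sub_smul_nonneg_and_apply_eq_zero [Nonempty ι] {a : ι → ℝ} (ha : ∀ i, 0 < a i)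
    (c : ι → ℝ) : ∃ t : ℝ, ∃ k, 0 ≤ c - t • a ∧ (c - t • a) k = 0 := by
  obtain ⟨k, -, hk⟩ := Finset.univ.exists_min_image (fun i => c i / a i) Finset.univ_nonempty
  refine ⟨c k / a k, k, fun i => ?_, ?_⟩
  · have := (le_div_iff₀ (ha i)).mp (hk i (Finset.mem_univ i))
    simpa [sub_nonneg] using this
  · simp [div_mul_cancel₀ _ (ha k).ne']

variable {K : ι → ConvexCone ℝ E} {p : ι → E}

theorem linearCombination_mem_of_apply_eq_zero (hp : ∀ i k, i ≠ k → p i ∈ K k) {b : ι → ℝ}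
    (hb : 0 ≤ b) (hb0 : b ≠ 0) {k : ι} (hbk : b k = 0) : Fintype.linearCombination ℝ p b ∈ K k :=
  ConvexCone.linearCombination_mem hb hb0 fun i hi => hp i k fun h => hi (h ▸ hbk)

theorem eq_zero_of_linearCombination_eq_zero (hK : ∀ k, (K k).Blunt)
    (hp : ∀ i k, i ≠ k → p i ∈ K k) {b : ι → ℝ} (hb : 0 ≤ b) {k : ι} (hbk : b k = 0)
    (h : Fintype.linearCombination ℝ p b = 0) : b = 0 := by
  by_contra hb0
  exact hK k (h ▸ linearCombination_mem_of_apply_eq_zero hp hb hb0 hbk)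

variable [FiniteDimensional ℝ E]

theorem eq_zero_of_nonneg_of_linearCombination_eq_zero (hK : ∀ k, (K k).Blunt)
    (hp : ∀ i k, i ≠ k → p i ∈ K k) (hcard : finrank ℝ E < Fintype.card ι)
    (hcover : Fintype.card ι = finrank ℝ E + 1 → ∃ y ≠ 0, ∀ k, y ∉ K k)
    {a : ι → ℝ} (ha : 0 ≤ a) (h : Fintype.linearCombination ℝ p a = 0) : a = 0 := by
  set L := Fintype.linearCombination ℝ p
  by_contra ha0
  have hpos : ∀ i, 0 < a i := fun i => (ha i).lt_of_ne fun hi =>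
    ha0 (eq_zero_of_linearCombination_eq_zero hK hp ha hi.symm h)
  have : Nonempty ι := Fintype.card_pos_iff.mp (by omega)
  have hshift : ∀ c, ∃ t : ℝ, ∃ k, 0 ≤ c - t • a ∧ (c - t • a) k = 0 ∧ L (c - t • a) = L c :=
    fun c => by
      obtain ⟨t, k, hb, hbk⟩ := exists_sub_smul_nonneg_and_apply_eq_zero hpos c
      exact ⟨t, k, hb, hbk, by rw [map_sub, map_smul, h, smul_zero, sub_zero]⟩
  have hker : finrank ℝ (LinearMap.ker L) ≤ 1 := by
    refine (finrank_span_singleton (K := ℝ) ha0).symm ▸ Submodule.finrank_mono fun c hc => ?_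
    obtain ⟨t, k, hb, hbk, hL⟩ := hshift c
    have := eq_zero_of_linearCombination_eq_zero hK hp hb hbk (hL.trans hc)
    exact Submodule.mem_span_singleton.mpr ⟨t, (sub_eq_zero.mp this).symm⟩
  have hrank := L.finrank_range_add_finrank_ker
  rw [Module.finrank_fintype_fun_eq_card ℝ] at hrank
  have hrange_le := Submodule.finrank_le (LinearMap.range L)
  obtain ⟨y, hy0, hyK⟩ := hcover (by omega)
  obtain ⟨c, rfl⟩ : y ∈ LinearMap.range L := by
    rw [Submodule.eq_top_of_finrank_eq (S := LinearMap.range L) (by omega)]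
    trivial
  obtain ⟨t, k, hb, hbk, hL⟩ := hshift c
  refine hyK k (hL ▸ linearCombination_mem_of_apply_eq_zero hp hb ?_ hbk)
  intro hb0
  rw [hb0, map_zero] at hL
  exact hy0 hL.symm

theorem exists_forall_mem_of_card_gt_finrank (hK : ∀ k, (K k).Blunt)
    (hp : ∀ i k, i ≠ k → p i ∈ K k) (hcard : finrank ℝ E < Fintype.card ι)
    (hcover : Fintype.card ι = finrank ℝ E + 1 → ∃ y ≠ 0, ∀ k, y ∉ K k) :
    ∃ z, ∀ k, z ∈ K k := by
  set L := Fintype.linearCombination ℝ p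
  have hnodep : ∀ b : ι → ℝ, 0 ≤ b → L b = 0 → b = 0 := fun _ =>
    eq_zero_of_nonneg_of_linearCombination_eq_zero hK hp hcard hcover
  obtain ⟨a, ha, ha0⟩ := Submodule.ne_bot_iff _ |>.mp <| LinearMap.ker_ne_bot_of_finrank_lt
    (f := L) (by rwa [Module.finrank_fintype_fun_eq_card ℝ])
  have ha : L a = 0 := ha
  -- Radon: `L a⁺ = L a⁻`, and at each `k` one of `a⁺`, `a⁻` vanishes
  have hL : L a⁺ = L a⁻ := by
    rw [← sub_eq_zero, ← map_sub, posPart_sub_negPart, ha]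
  have hpos : a⁺ ≠ 0 := fun h => ha0 (by
    have := hnodep _ (neg_nonneg.mpr (posPart_eq_zero.mp h)) (by rw [map_neg, ha, neg_zero])
    exact neg_eq_zero.mp this)
  have hneg : a⁻ ≠ 0 := fun h => ha0 (hnodep _ (negPart_eq_zero.mp h) ha)
  refine ⟨L a⁺, fun k => ?_⟩
  rcases le_or_gt (a k) 0 with hk | hk
  · exact linearCombination_mem_of_apply_eq_zero hp (posPart_nonneg a) hpos
      (by simpa using hk)
  · exact hL ▸ linearCombination_mem_of_apply_eq_zero hp (negPart_nonneg a) hneg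
      (by simpa using hk.le)

end ConeFamily

section SConvex

variable {n : ℕ} {Φ : EuclideanSpace ℝ (Fin n) → ℝ}

theorem rho_smul_of_pos (hhom : ∀ (t : ℝ), 0 ≤ t → ∀ x, Φ (t • x) = t * Φ x) {t : ℝ}
    (ht : 0 < t) (x : EuclideanSpace ℝ (Fin n)) : rho Φ (t • x) = rho Φ x := by
  rw [rho, rho, hhom t ht.le, smul_smul, mul_inv_rev, mul_assoc, inv_mul_cancel₀ ht.ne', mul_one]

theorem rho_eq_self_of_mem_sphereSet {x : EuclideanSpace ℝ (Fin n)} (hx : x ∈ sphereSet Φ) :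
    rho Φ x = x := by
  rw [rho, show Φ x = 1 from hx, inv_one, one_smul]

theorem zero_notMem_sphereSet (hhom : ∀ (t : ℝ), 0 ≤ t → ∀ x, Φ (t • x) = t * Φ x) :
    0 ∉ sphereSet Φ := by
  have h0 : Φ 0 = 0 := by simpa using hhom 0 le_rfl 0
  simp [sphereSet, h0]

theorem pos_of_rho_mem_sphereSet (hnn : ∀ x, 0 ≤ Φ x)
    (hhom : ∀ (t : ℝ), 0 ≤ t → ∀ x, Φ (t • x) = t * Φ x) {x : EuclideanSpace ℝ (Fin n)}
    (hx : rho Φ x ∈ sphereSet Φ) : 0 < Φ x :=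
  (hnn x).lt_of_ne fun h => zero_notMem_sphereSet hhom (by simpa [rho, ← h] using hx)

theorem SConvex.rho_add_mem (hnn : ∀ x, 0 ≤ Φ x)
    (hhom : ∀ (t : ℝ), 0 ≤ t → ∀ x, Φ (t • x) = t * Φ x) {S : Set (EuclideanSpace ℝ (Fin n))}
    (hS : S ⊆ sphereSet Φ) (hconv : SConvex Φ S) {u v : EuclideanSpace ℝ (Fin n)}
    (hu : rho Φ u ∈ S) (hv : rho Φ v ∈ S) : rho Φ (u + v) ∈ S := by
  have hu0 := pos_of_rho_mem_sphereSet hnn hhom (hS hu)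
  have hv0 := pos_of_rho_mem_sphereSet hnn hhom (hS hv)
  set l := Φ u / (Φ u + Φ v)
  have hl : l ∈ Icc (0 : ℝ) 1 := ⟨by positivity, div_le_one_of_le₀ (by linarith) (by positivity)⟩
  have huv : u + v = (Φ u + Φ v) • (l • rho Φ u + (1 - l) • rho Φ v) := by
    have h1l : 1 - l = Φ v / (Φ u + Φ v) := by
      simp only [l]
      field_simp
      ring
    rw [h1l, smul_add, smul_smul, smul_smul, mul_div_cancel₀ _ (by positivity),
      mul_div_cancel₀ _ (by positivity), rho, rho, smul_inv_smul₀ hu0.ne',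
      smul_inv_smul₀ hv0.ne']
  rw [huv, rho_smul_of_pos hhom (by positivity)]
  exact hconv _ hu _ hv l hl

def SConvex.cone (hnn : ∀ x, 0 ≤ Φ x) (hhom : ∀ (t : ℝ), 0 ≤ t → ∀ x, Φ (t • x) = t * Φ x)
    {S : Set (EuclideanSpace ℝ (Fin n))} (hS : S ⊆ sphereSet Φ) (hconv : SConvex Φ S) :
    ConvexCone ℝ (EuclideanSpace ℝ (Fin n)) where
  carrier := rho Φ ⁻¹' S
  smul_mem' _ hc x hx := by rwa [mem_preimage, rho_smul_of_pos hhom hc]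
  add_mem' _ hu _ hv := hconv.rho_add_mem hnn hhom hS hu hv

variable (hnn : ∀ x, 0 ≤ Φ x) (hhom : ∀ (t : ℝ), 0 ≤ t → ∀ x, Φ (t • x) = t * Φ x)
  {S : Set (EuclideanSpace ℝ (Fin n))} (hS : S ⊆ sphereSet Φ) (hconv : SConvex Φ S)

@[simp]
theorem SConvex.mem_cone {z : EuclideanSpace ℝ (Fin n)} :
    z ∈ hconv.cone hnn hhom hS ↔ rho Φ z ∈ S :=
  Iff.rfl

theorem SConvex.mem_cone_of_mem {x : EuclideanSpace ℝ (Fin n)} (hx : x ∈ S) :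
    x ∈ hconv.cone hnn hhom hS := by
  rwa [mem_cone, rho_eq_self_of_mem_sphereSet (hS hx)]

theorem SConvex.blunt_cone : (hconv.cone hnn hhom hS).Blunt := fun h =>
  zero_notMem_sphereSet hhom (hS (by simpa [rho] using h))

end SConvex

section Helly

variable {n : ℕ} {Φ : EuclideanSpace ℝ (Fin n) → ℝ} (hnn : ∀ x, 0 ≤ Φ x)
  (hhom : ∀ (t : ℝ), 0 ≤ t → ∀ x, Φ (t • x) = t * Φ x) {ι : Type*} [DecidableEq ι]
  {C : ι → Set (EuclideanSpace ℝ (Fin n))} (hCsub : ∀ i, C i ⊆ sphereSet Φ)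
  (hCconv : ∀ i, SConvex Φ (C i))
include hnn hhom hCsub hCconv

theorem SConvex.biInter_nonempty_of_biInter_erase_nonempty {J : Finset ι} (hJ : n < J.card)
    (hUn : J.card = n + 1 → ⋃ j ∈ J, C j ≠ sphereSet Φ)
    (herase : ∀ j ∈ J, (⋂ k ∈ J.erase j, C k).Nonempty) : (⋂ j ∈ J, C j).Nonempty := by
  choose p hp using herase
  obtain ⟨z, hz⟩ := exists_forall_mem_of_card_gt_finrank
    (K := fun j : J => (hCconv j).cone hnn hhom (hCsub j)) (p := fun j => p j j.2)
    (fun j => (hCconv j).blunt_cone hnn hhom (hCsub j))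
    (fun i k hik => (hCconv k).mem_cone_of_mem hnn hhom (hCsub k) <|
      mem_iInter₂.mp (hp i i.2) k (Finset.mem_erase.mpr ⟨fun h => hik (Subtype.ext h).symm, k.2⟩))
    (by rwa [finrank_euclideanSpace_fin, Fintype.card_coe])
    (fun hcard => by
      rw [Fintype.card_coe, finrank_euclideanSpace_fin] at hcard
      obtain ⟨y, hy, hyC⟩ := exists_of_ssubset <|
        (iUnion₂_subset fun j _ => hCsub j).ssubset_of_ne (hUn hcard)
      refine ⟨y, fun h => zero_notMem_sphereSet hhom (h ▸ hy), fun k hk => hyC ?_⟩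
      rw [SConvex.mem_cone, rho_eq_self_of_mem_sphereSet hy] at hk
      exact mem_biUnion k.2 hk)
  exact ⟨rho Φ z, mem_iInter₂.mpr fun j hj => hz ⟨j, hj⟩⟩

theorem SConvex.biInter_nonempty_of_card_le
    (hInt : ∀ J : Finset ι, J.card = n → (⋂ j ∈ J, C j).Nonempty)
    (hUn : ∀ J : Finset ι, J.card = n + 1 → (⋃ j ∈ J, C j) ≠ sphereSet Φ)
    {J : Finset ι} (hJ : n ≤ J.card) : (⋂ j ∈ J, C j).Nonempty := by
  obtain ⟨r, hr⟩ := Nat.exists_eq_add_of_le hJ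
  induction r generalizing J with
  | zero => exact hInt J hr
  | succ r ih =>
    refine biInter_nonempty_of_biInter_erase_nonempty hnn hhom hCsub hCconv (by omega) (hUn J)
      fun j hj => ?_
    have hcard : (J.erase j).card = n + r := by rw [Finset.card_erase_of_mem hj]; omega
    exact ih (by omega) hcard

end Helly

theorem stmt19_general {n : ℕ} (Φ : EuclideanSpace ℝ (Fin n) → ℝ)
    (hnn : ∀ x, 0 ≤ Φ x)
    (hhom : ∀ (t : ℝ), 0 ≤ t → ∀ x, Φ (t • x) = t * Φ x)
    (m : ℕ) (hm : n ≤ m) (C : Fin m → Set (EuclideanSpace ℝ (Fin n)))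
    (hCsub : ∀ i, C i ⊆ sphereSet Φ)
    (hCconv : ∀ i, SConvex Φ (C i))
    (hInt : ∀ J : Finset (Fin m), J.card = n → (⋂ j ∈ J, C j).Nonempty)
    (hUn : ∀ J : Finset (Fin m), J.card = n + 1 → (⋃ j ∈ J, C j) ≠ sphereSet Φ) :
    (⋂ i, C i).Nonempty := by
  simpa using SConvex.biInter_nonempty_of_card_le hnn hhom hCsub hCconv hInt hUn
    (J := Finset.univ) (by simpa using hm)

theorem stmt19 {n : ℕ} (hn : 2 ≤ n) (Φ : EuclideanSpace ℝ (Fin n) → ℝ)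
    (hc : Continuous Φ) (hnn : ∀ x, 0 ≤ Φ x)
    (hhom : ∀ (t : ℝ), 0 ≤ t → ∀ x, Φ (t • x) = t * Φ x)
    (hzero : ∀ x, Φ x = 0 ↔ x = 0)
    (m : ℕ) (hm : n ≤ m) (C : Fin m → Set (EuclideanSpace ℝ (Fin n)))
    (hCne : ∀ i, (C i).Nonempty) (hCsub : ∀ i, C i ⊆ sphereSet Φ)
    (hCconv : ∀ i, SConvex Φ (C i))
    (hInt : ∀ J : Finset (Fin m), J.card = n → (⋂ j ∈ J, C j).Nonempty)
    (hUn : ∀ J : Finset (Fin m), J.card = n + 1 → (⋃ j ∈ J, C j) ≠ sphereSet Φ) :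
    (⋂ i, C i).Nonempty :=
  stmt19_general Φ hnn hhom m hm C hCsub hCconv hInt hUn
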